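/- arXiv:1702.07803 — 2 statements merged into one kernel-verified Lean document; each statement's English description precedes it below -/
import Mathlib

section
/- Let c ∈ (0,1) and let Σ ∈ ℝ^{D×D} be a symmetric matrix with unit diagonal (Σ_{j,j} = 1 for all j) that is c-bandable, i.e., |Σ_{i,j}| ≤ c^{|i−j|} for all i, j. Then every eigenvalue λ of Σ satisfies (1 − 3c)/(1 − c) ≤ λ ≤ (1 + c)/(1 − c). In particular, if c < 1/3, then the smallest eigenvalue of Σ is at least (1 − 3c)/(1 − c) > 0, a positive bound independent of D. -/
open MeasureTheory ProbabilityTheory Matrix Real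

noncomputable section

lemma geom_aux (c : ℝ) (hc0 : 0 < c) (hc1 : c < 1) (n : ℕ) :
    ∑ i ∈ Finset.range n, c ^ i ≤ (1 - c)⁻¹ := by
  have h1 : 0 < 1 - c := by linarith
  rw [geom_sum_eq (ne_of_lt hc1)]
  have h2 : (c ^ n - 1) / (c - 1) = (1 - c ^ n) / (1 - c) := by
    rw [← neg_div_neg_eq]; ring_nf
  rw [h2, div_le_iff₀ h1, inv_mul_cancel₀ (ne_of_gt h1)]
  have : 0 ≤ c ^ n := le_of_lt (pow_pos hc0 n)
  linarith

lemma side_sum {D : ℕ} (c : ℝ) (hc0 : 0 < c) (hc1 : c < 1)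
    (s : Finset (Fin D)) (f : Fin D → ℕ)
    (hinj : ∀ a ∈ s, ∀ b ∈ s, f a = f b → a = b)
    (h1 : ∀ j ∈ s, 1 ≤ f j) (h2 : ∀ j ∈ s, f j ≤ D) :
    ∑ j ∈ s, c ^ (f j) ≤ c / (1 - c) := by
  have h1c : 0 < 1 - c := by linarith
  calc ∑ j ∈ s, c ^ (f j) = ∑ d ∈ s.image f, c ^ d := (Finset.sum_image hinj).symm
    _ ≤ ∑ d ∈ Finset.Ico 1 (D + 1), c ^ d := by
        apply Finset.sum_le_sum_of_subset_of_nonneg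
        · intro d hd
          obtain ⟨j, hj, rfl⟩ := Finset.mem_image.mp hd
          exact Finset.mem_Ico.mpr ⟨h1 j hj, Nat.lt_succ_of_le (h2 j hj)⟩
        · intro d _ _
          exact le_of_lt (pow_pos hc0 d)
    _ = c * ∑ i ∈ Finset.range D, c ^ i := by
        rw [Finset.sum_Ico_eq_sum_range, Finset.mul_sum]
        simp [pow_succ, pow_add, mul_comm]
    _ ≤ c * (1 - c)⁻¹ := by
        apply mul_le_mul_of_nonneg_left (geom_aux c hc0 hc1 D) (le_of_lt hc0)
    _ = c / (1 - c) := by rw [div_eq_mul_inv]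

lemma band_sum {D : ℕ} (c : ℝ) (hc0 : 0 < c) (hc1 : c < 1) (k : Fin D) :
    ∑ j ∈ Finset.univ.erase k, c ^ ((k : ℤ) - (j : ℤ)).natAbs ≤ 2 * c / (1 - c) := by
  classical
  rw [← Finset.sum_filter_add_sum_filter_not (Finset.univ.erase k) (fun j => j.val < k.val)]
  have hA : ∑ j ∈ (Finset.univ.erase k).filter (fun j => j.val < k.val),
      c ^ ((k : ℤ) - (j : ℤ)).natAbs ≤ c / (1 - c) := by
    apply side_sum c hc0 hc1
    · intro a ha b hb h
      simp only [Finset.mem_filter, Finset.mem_erase] at ha hb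
      have := a.isLt; have := b.isLt
      exact Fin.ext (by omega)
    · intro j hj
      simp only [Finset.mem_filter, Finset.mem_erase] at hj
      omega
    · intro j hj
      have := j.isLt; have := k.isLt
      omega
  have hB : ∑ j ∈ (Finset.univ.erase k).filter (fun j => ¬ j.val < k.val),
      c ^ ((k : ℤ) - (j : ℤ)).natAbs ≤ c / (1 - c) := by
    apply side_sum c hc0 hc1
    · intro a ha b hb h
      simp only [Finset.mem_filter, Finset.mem_erase] at ha hb
      have hak : a ≠ k := ha.1.1
      have hbk : b ≠ k := hb.1.1
      have hak' : a.val ≠ k.val := fun h' => hak (Fin.ext h')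
      have hbk' : b.val ≠ k.val := fun h' => hbk (Fin.ext h')
      exact Fin.ext (by omega)
    · intro j hj
      simp only [Finset.mem_filter, Finset.mem_erase] at hj
      have : j.val ≠ k.val := fun h' => hj.1.1 (Fin.ext h')
      omega
    · intro j hj
      have := j.isLt; have := k.isLt
      omega
  have : 2 * c / (1 - c) = c / (1 - c) + c / (1 - c) := by ring
  linarith

/-- Eigenvalues of a bandable correlation matrix. -/
theorem stmt9 {D : ℕ} (c : ℝ) (hc : c ∈ Set.Ioo (0 : ℝ) 1)
    (S : Matrix (Fin D) (Fin D) ℝ) (hS : S.IsHermitian) (hdiag : ∀ j, S j j = 1)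
    (hband : ∀ i j, |S i j| ≤ c ^ ((i : ℤ) - (j : ℤ)).natAbs) :
    (∀ j, (1 - 3 * c) / (1 - c) ≤ hS.eigenvalues j ∧
      hS.eigenvalues j ≤ (1 + c) / (1 - c)) ∧
    (c < 1 / 3 → ∀ j, 0 < hS.eigenvalues j ∧ (1 - 3 * c) / (1 - c) ≤ hS.eigenvalues j) := by
  obtain ⟨hc0, hc1⟩ := hc
  have h1c : 0 < 1 - c := by linarith
  have key : ∀ j, (1 - 3 * c) / (1 - c) ≤ hS.eigenvalues j ∧
      hS.eigenvalues j ≤ (1 + c) / (1 - c) := by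
    intro j
    -- eigenvalue of toLin'
    have hev : Module.End.HasEigenvalue (Matrix.toLin' S) (hS.eigenvalues j) := by
      apply Module.End.hasEigenvalue_of_hasEigenvector (x := ⇑(hS.eigenvectorBasis j))
      constructor
      · rw [Module.End.mem_eigenspace_iff, Matrix.toLin'_apply]
        exact hS.mulVec_eigenvectorBasis j
      · have := hS.eigenvectorBasis.orthonormal.ne_zero j
        intro h
        apply this
        ext i
        exact congrFun h i
    obtain ⟨k, hk⟩ := eigenvalue_mem_ball hev
    rw [Metric.mem_closedBall, Real.dist_eq, hdiag k] at hk
    have hsum : ∑ i ∈ Finset.univ.erase k, ‖S k i‖ ≤ 2 * c / (1 - c) := by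
      calc ∑ i ∈ Finset.univ.erase k, ‖S k i‖
          ≤ ∑ i ∈ Finset.univ.erase k, c ^ ((k : ℤ) - (i : ℤ)).natAbs :=
            Finset.sum_le_sum fun i _ => (Real.norm_eq_abs _ ▸ hband k i)
        _ ≤ 2 * c / (1 - c) := band_sum c hc0 hc1 k
    have habs : |hS.eigenvalues j - 1| ≤ 2 * c / (1 - c) := le_trans hk hsum
    rw [abs_le] at habs
    have e1 : (1 - 3 * c) / (1 - c) = 1 - 2 * c / (1 - c) := by
      field_simp
      ring
    have e2 : (1 + c) / (1 - c) = 1 + 2 * c / (1 - c) := by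
      field_simp
      ring
    rw [e1, e2]
    constructor <;> linarith [habs.1, habs.2]
  refine ⟨key, fun hc3 j => ⟨?_, (key j).1⟩⟩
  have hpos : 0 < (1 - 3 * c) / (1 - c) := by
    apply div_pos (by linarith) h1c
  linarith [(key j).1]

end
end

section
/- Let X, X' ∈ ℝ^{n×D} be two data matrices, each with no ties within any column, that differ only in a single row (sample). Then for all j, k ∈ {1,...,D}, the empirical Spearman rank correlations satisfy |ρ̂_{j,k}(X) − ρ̂_{j,k}(X')| ≤ 18/n, and consequently ‖ρ̂(X) − ρ̂(X')‖_F ≤ 18·D/n. -/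
open MeasureTheory ProbabilityTheory Matrix Real

noncomputable section

/-- Empirical rank of sample `i` in dimension `j`: `R i j = #{k : X k j ≤ X i j}`. -/
def rankMatrix {n D : ℕ} (X : Fin n → Fin D → ℝ) (i : Fin n) (j : Fin D) : ℝ :=
  ∑ k : Fin n, if X k j ≤ X i j then 1 else 0

/-- Empirical Spearman rank correlation between columns `j` and `k`, via the classical
formula `ρ̂ = 1 - 6 ∑ d² / (n(n²-1))` in terms of rank differences. -/
def spearmanFormula {n D : ℕ} (X : Fin n → Fin D → ℝ) (j k : Fin D) : ℝ :=
  1 - 6 * (∑ i, (rankMatrix X i j - rankMatrix X i k) ^ 2) / (n * ((n : ℝ) ^ 2 - 1))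

/-- Frobenius norm of a matrix. -/
def frobNorm {D₁ D₂ : ℕ} (M : Matrix (Fin D₁) (Fin D₂) ℝ) : ℝ :=
  Real.sqrt (∑ i, ∑ j, (M i j) ^ 2)

section Aux

open Finset

variable {n D : ℕ}

/-- The rank is the cardinality of the set of smaller-or-equal entries. -/
lemma rankMatrix_eq_card (X : Fin n → Fin D → ℝ) (i : Fin n) (j : Fin D) :
    rankMatrix X i j = ((univ.filter fun k => X k j ≤ X i j).card : ℝ) := by
  simp [rankMatrix]

lemma one_le_rankCard (X : Fin n → Fin D → ℝ) (i : Fin n) (j : Fin D) :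
    1 ≤ (univ.filter fun k => X k j ≤ X i j).card :=
  Finset.card_pos.mpr ⟨i, by simp⟩

lemma rankCard_le (X : Fin n → Fin D → ℝ) (i : Fin n) (j : Fin D) :
    (univ.filter fun k => X k j ≤ X i j).card ≤ n := by
  simpa using Finset.card_filter_le univ (fun k => X k j ≤ X i j)

lemma rankCard_lt (X : Fin n → Fin D → ℝ) {i i' : Fin n} {j : Fin D}
    (h : X i j < X i' j) :
    (univ.filter fun k => X k j ≤ X i j).card <
      (univ.filter fun k => X k j ≤ X i' j).card := by
  apply Finset.card_lt_card
  constructor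
  · intro k hk
    simp only [mem_filter, mem_univ, true_and] at *
    exact hk.trans h.le
  · intro hsub
    have := hsub (by simp : i' ∈ univ.filter fun k => X k j ≤ X i' j)
    simp only [mem_filter, mem_univ, true_and] at this
    exact absurd this (not_le.mpr h)

lemma rankCard_inj (X : Fin n → Fin D → ℝ) (hX : ∀ j, Function.Injective fun i => X i j)
    (j : Fin D) :
    Function.Injective (fun i => (univ.filter fun k => X k j ≤ X i j).card) := by
  intro i i' h
  by_contra hne
  have hXne : X i j ≠ X i' j := fun hc => hne (hX j hc)
  rcases hXne.lt_or_gt with hlt | hlt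
  · exact absurd h (Nat.ne_of_lt (rankCard_lt X hlt))
  · exact absurd h.symm (Nat.ne_of_lt (rankCard_lt X hlt))

/-- The ranks in column `j` are exactly a permutation of `{1, ..., n}`. -/
lemma rank_image (X : Fin n → Fin D → ℝ) (hX : ∀ j, Function.Injective fun i => X i j)
    (j : Fin D) :
    (univ.image fun i => (univ.filter fun k => X k j ≤ X i j).card) = Finset.Icc 1 n := by
  apply Finset.eq_of_subset_of_card_le
  · intro r hr
    simp only [mem_image, mem_univ, true_and] at hr
    obtain ⟨i, rfl⟩ := hr
    exact Finset.mem_Icc.mpr ⟨one_le_rankCard X i j, rankCard_le X i j⟩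
  · rw [Finset.card_image_of_injective _ (rankCard_inj X hX j)]
    simp [Nat.card_Icc]

/-- Sums of a function of ranks only depend on `n`. -/
lemma sum_rank_fun (X : Fin n → Fin D → ℝ) (hX : ∀ j, Function.Injective fun i => X i j)
    (j : Fin D) (g : ℝ → ℝ) :
    ∑ i, g (rankMatrix X i j) = ∑ r ∈ Finset.Icc 1 n, g (r : ℝ) := by
  have := Finset.sum_image (g := fun i => (univ.filter fun k => X k j ≤ X i j).card)
    (f := fun r : ℕ => g (r : ℝ)) (s := univ)
    (fun i _ i' _ h => rankCard_inj X hX j h)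
  rw [rank_image X hX j] at this
  simp only [rankMatrix_eq_card]
  exact this.symm

/-- Changing one row changes each other rank by at most 1. -/
lemma rank_diff_le (X X' : Fin n → Fin D → ℝ) (i₀ : Fin n)
    (hrow : ∀ i, i ≠ i₀ → X i = X' i) {i : Fin n} (hi : i ≠ i₀) (j : Fin D) :
    |rankMatrix X i j - rankMatrix X' i j| ≤ 1 := by
  set S := univ.filter fun k => X k j ≤ X i j with hS
  set S' := univ.filter fun k => X' k j ≤ X' i j with hS'
  have hXi : X i j = X' i j := by rw [hrow i hi]
  have herase : S.erase i₀ = S'.erase i₀ := by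
    ext m
    simp only [hS, hS', Finset.mem_erase, mem_filter, mem_univ, true_and]
    constructor
    · rintro ⟨hm, hle⟩
      exact ⟨hm, by rw [← hXi, ← hrow m hm]; exact hle⟩
    · rintro ⟨hm, hle⟩
      exact ⟨hm, by rw [hrow m hm, hXi]; exact hle⟩
  have haux : ∀ (T : Finset (Fin n)), T.card ≤ (T.erase i₀).card + 1 := by
    intro T
    calc T.card ≤ (insert i₀ (T.erase i₀)).card :=
          Finset.card_le_card (Finset.subset_insert_iff.mpr Finset.Subset.rfl)
      _ ≤ (T.erase i₀).card + 1 := Finset.card_insert_le _ _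
  have h1 : S.card ≤ S'.card + 1 := by
    calc S.card ≤ (S.erase i₀).card + 1 := haux S
      _ = (S'.erase i₀).card + 1 := by rw [herase]
      _ ≤ S'.card + 1 := by
          have := Finset.card_erase_le (s := S') (a := i₀)
          omega
  have h2 : S'.card ≤ S.card + 1 := by
    calc S'.card ≤ (S'.erase i₀).card + 1 := haux S'
      _ = (S.erase i₀).card + 1 := by rw [herase]
      _ ≤ S.card + 1 := by
          have := Finset.card_erase_le (s := S) (a := i₀)
          omega
  rw [rankMatrix_eq_card, rankMatrix_eq_card]
  rw [abs_sub_le_iff]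
  have h1' : (S.card : ℝ) ≤ (S'.card : ℝ) + 1 := by exact_mod_cast h1
  have h2' : (S'.card : ℝ) ≤ (S.card : ℝ) + 1 := by exact_mod_cast h2
  constructor <;> [skip; skip] <;> simp only [← hS, ← hS'] <;> linarith

/-- Ranks lie in `[1, n]`. -/
lemma rank_bounds (X : Fin n → Fin D → ℝ) (i : Fin n) (j : Fin D) :
    1 ≤ rankMatrix X i j ∧ rankMatrix X i j ≤ n := by
  rw [rankMatrix_eq_card]
  exact ⟨by exact_mod_cast one_le_rankCard X i j, by exact_mod_cast rankCard_le X i j⟩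

/-- Key entrywise bound. -/
lemma spearman_diff_le (X X' : Fin n → Fin D → ℝ)
    (hX : ∀ j, Function.Injective fun i => X i j)
    (hX' : ∀ j, Function.Injective fun i => X' i j)
    (i₀ : Fin n) (hrow : ∀ i, i ≠ i₀ → X i = X' i) (j k : Fin D) :
    |spearmanFormula X j k - spearmanFormula X' j k| ≤ 18 / n := by
  rcases le_or_gt n 1 with hn | hn
  · interval_cases n
    · norm_num [spearmanFormula]
    · norm_num [spearmanFormula]
  · -- n ≥ 2
    have hn2 : (2 : ℝ) ≤ (n : ℝ) := by exact_mod_cast hn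
    set c : ℝ := ((n : ℝ) + 1) / 2 with hc
    set a : Fin n → ℝ := fun i => rankMatrix X i j - c with ha
    set b : Fin n → ℝ := fun i => rankMatrix X i k - c with hb
    set a' : Fin n → ℝ := fun i => rankMatrix X' i j - c with ha'
    set b' : Fin n → ℝ := fun i => rankMatrix X' i k - c with hb'
    have habs : ∀ i, |a i| ≤ ((n : ℝ) - 1) / 2 := fun i => by
      obtain ⟨h1, h2⟩ := rank_bounds X i j
      rw [abs_le]; constructor <;> simp only [ha, hc] <;> linarith
    have hbabs : ∀ i, |b i| ≤ ((n : ℝ) - 1) / 2 := fun i => by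
      obtain ⟨h1, h2⟩ := rank_bounds X i k
      rw [abs_le]; constructor <;> simp only [hb, hc] <;> linarith
    have ha'abs : ∀ i, |a' i| ≤ ((n : ℝ) - 1) / 2 := fun i => by
      obtain ⟨h1, h2⟩ := rank_bounds X' i j
      rw [abs_le]; constructor <;> simp only [ha', hc] <;> linarith
    have hb'abs : ∀ i, |b' i| ≤ ((n : ℝ) - 1) / 2 := fun i => by
      obtain ⟨h1, h2⟩ := rank_bounds X' i k
      rw [abs_le]; constructor <;> simp only [hb', hc] <;> linarith
    have hda : ∀ i, i ≠ i₀ → |a i - a' i| ≤ 1 := fun i hi => by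
      have := rank_diff_le X X' i₀ hrow hi j
      simpa [ha, ha'] using this
    have hdb : ∀ i, i ≠ i₀ → |b i - b' i| ≤ 1 := fun i hi => by
      have := rank_diff_le X X' i₀ hrow hi k
      simpa [hb, hb'] using this
    -- sums of squares of centered ranks agree
    have hsq : ∑ i, (a i) ^ 2 = ∑ i, (a' i) ^ 2 :=
      (sum_rank_fun X hX j (fun x => (x - c) ^ 2)).trans
        (sum_rank_fun X' hX' j (fun x => (x - c) ^ 2)).symm
    have hsq' : ∑ i, (b i) ^ 2 = ∑ i, (b' i) ^ 2 :=
      (sum_rank_fun X hX k (fun x => (x - c) ^ 2)).trans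
        (sum_rank_fun X' hX' k (fun x => (x - c) ^ 2)).symm
    set S : ℝ := ∑ i, (rankMatrix X i j - rankMatrix X i k) ^ 2 with hSdef
    set S' : ℝ := ∑ i, (rankMatrix X' i j - rankMatrix X' i k) ^ 2 with hS'def
    set P : ℝ := ∑ i, a i * b i with hP
    set P' : ℝ := ∑ i, a' i * b' i with hP'
    have hSexp : S = ∑ i, (a i) ^ 2 + ∑ i, (b i) ^ 2 - 2 * P := by
      rw [hSdef, hP, Finset.mul_sum, ← Finset.sum_add_distrib, ← Finset.sum_sub_distrib]
      exact Finset.sum_congr rfl fun i _ => by simp only [ha, hb]; ring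
    have hS'exp : S' = ∑ i, (a' i) ^ 2 + ∑ i, (b' i) ^ 2 - 2 * P' := by
      rw [hS'def, hP', Finset.mul_sum, ← Finset.sum_add_distrib, ← Finset.sum_sub_distrib]
      exact Finset.sum_congr rfl fun i _ => by simp only [ha', hb']; ring
    have hSS' : S - S' = -2 * (P - P') := by rw [hSexp, hS'exp, hsq, hsq']; ring
    -- bound on |P - P'|
    have hPP' : |P - P'| ≤ 3 * ((n : ℝ) - 1) ^ 2 / 2 := by
      have hsplit : P - P' = ∑ i, (a i * b i - a' i * b' i) := by
        rw [hP, hP', Finset.sum_sub_distrib]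
      rw [hsplit]
      have hterm : ∀ i ∈ univ.erase i₀, |a i * b i - a' i * b' i| ≤ (n : ℝ) - 1 := by
        intro i hi
        have hi' : i ≠ i₀ := (Finset.mem_erase.mp hi).1
        have : a i * b i - a' i * b' i = (a i - a' i) * b i + a' i * (b i - b' i) := by ring
        rw [this]
        calc |(a i - a' i) * b i + a' i * (b i - b' i)|
            ≤ |(a i - a' i) * b i| + |a' i * (b i - b' i)| := abs_add_le _ _
          _ = |a i - a' i| * |b i| + |a' i| * |b i - b' i| := by rw [abs_mul, abs_mul]
          _ ≤ 1 * (((n : ℝ) - 1) / 2) + (((n : ℝ) - 1) / 2) * 1 := by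
              have hnn : (0 : ℝ) ≤ ((n : ℝ) - 1) / 2 := by linarith
              exact add_le_add
                (mul_le_mul (hda i hi') (hbabs i) (abs_nonneg _) (by norm_num))
                (mul_le_mul (ha'abs i) (hdb i hi') (abs_nonneg _) hnn)
          _ = (n : ℝ) - 1 := by ring
      have hterm0 : |a i₀ * b i₀ - a' i₀ * b' i₀| ≤ ((n : ℝ) - 1) ^ 2 / 2 := by
        calc |a i₀ * b i₀ - a' i₀ * b' i₀|
            ≤ |a i₀ * b i₀| + |a' i₀ * b' i₀| := abs_sub _ _
          _ = |a i₀| * |b i₀| + |a' i₀| * |b' i₀| := by rw [abs_mul, abs_mul]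
          _ ≤ (((n : ℝ) - 1) / 2) * (((n : ℝ) - 1) / 2)
              + (((n : ℝ) - 1) / 2) * (((n : ℝ) - 1) / 2) := by
              have hnn : (0 : ℝ) ≤ ((n : ℝ) - 1) / 2 := by linarith
              exact add_le_add
                (mul_le_mul (habs i₀) (hbabs i₀) (abs_nonneg _) hnn)
                (mul_le_mul (ha'abs i₀) (hb'abs i₀) (abs_nonneg _) hnn)
          _ = ((n : ℝ) - 1) ^ 2 / 2 := by ring
      calc |∑ i, (a i * b i - a' i * b' i)|
          ≤ ∑ i, |a i * b i - a' i * b' i| := Finset.abs_sum_le_sum_abs _ _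
        _ = ∑ i ∈ univ.erase i₀, |a i * b i - a' i * b' i| + |a i₀ * b i₀ - a' i₀ * b' i₀| :=
            (Finset.sum_erase_add _ _ (mem_univ i₀)).symm
        _ ≤ (univ.erase i₀).card * ((n : ℝ) - 1) + ((n : ℝ) - 1) ^ 2 / 2 := by
            have h := Finset.sum_le_card_nsmul (univ.erase i₀)
              (fun i => |a i * b i - a' i * b' i|) _ hterm
            rw [nsmul_eq_mul] at h
            exact add_le_add h hterm0
        _ = ((n : ℝ) - 1) * ((n : ℝ) - 1) + ((n : ℝ) - 1) ^ 2 / 2 := by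
            have hcard : (univ.erase i₀).card = n - 1 := by
              rw [Finset.card_erase_of_mem (mem_univ i₀)]; simp
            rw [hcard]
            have : ((n - 1 : ℕ) : ℝ) = (n : ℝ) - 1 := by
              have : 1 ≤ n := by omega
              push_cast [this]; ring
            rw [this]
        _ = 3 * ((n : ℝ) - 1) ^ 2 / 2 := by ring
    -- put everything together
    set dn : ℝ := (n : ℝ) * ((n : ℝ) ^ 2 - 1) with hdn
    have hdnpos : 0 < dn := by
      rw [hdn]; nlinarith
    have hform : spearmanFormula X j k - spearmanFormula X' j k = 12 * (P - P') / dn := by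
      have h6 : 6 * S' - 6 * S = 12 * (P - P') := by nlinarith [hSS']
      simp only [spearmanFormula, ← hSdef, ← hS'def, ← hdn]
      rw [← h6]; ring
    rw [hform, abs_div, abs_of_pos hdnpos]
    rw [div_le_div_iff₀ hdnpos (by positivity : (0 : ℝ) < (n : ℝ))]
    have h12 : |12 * (P - P')| ≤ 18 * ((n : ℝ) - 1) ^ 2 := by
      rw [abs_mul]
      calc |(12 : ℝ)| * |P - P'| = 12 * |P - P'| := by norm_num
        _ ≤ 12 * (3 * ((n : ℝ) - 1) ^ 2 / 2) := by
            have := hPP'; linarith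
        _ = 18 * ((n : ℝ) - 1) ^ 2 := by ring
    have : 18 * ((n : ℝ) - 1) ^ 2 * (n : ℝ) ≤ 18 * dn := by
      rw [hdn]; nlinarith
    calc |12 * (P - P')| * (n : ℝ) ≤ 18 * ((n : ℝ) - 1) ^ 2 * (n : ℝ) := by
          have hnpos : (0 : ℝ) ≤ (n : ℝ) := by positivity
          exact mul_le_mul_of_nonneg_right h12 hnpos
      _ ≤ 18 * dn := this

end Aux

/-- Bounded differences of empirical Spearman correlations. -/
theorem stmt12 {n D : ℕ} (X X' : Fin n → Fin D → ℝ)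
    (hX : ∀ j, Function.Injective fun i => X i j)
    (hX' : ∀ j, Function.Injective fun i => X' i j)
    (hrow : ∃ i₀ : Fin n, ∀ i, i ≠ i₀ → X i = X' i) :
    (∀ j k, |spearmanFormula X j k - spearmanFormula X' j k| ≤ 18 / n) ∧
      frobNorm (Matrix.of (spearmanFormula X) - Matrix.of (spearmanFormula X')) ≤
        18 * D / n := by
  obtain ⟨i₀, hrow⟩ := hrow
  have hkey : ∀ j k, |spearmanFormula X j k - spearmanFormula X' j k| ≤ 18 / n :=
    fun j k => spearman_diff_le X X' hX hX' i₀ hrow j k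
  refine ⟨hkey, ?_⟩
  have hbound : ∑ i, ∑ j, ((Matrix.of (spearmanFormula X) - Matrix.of (spearmanFormula X')) i j) ^ 2
      ≤ (18 * D / n) ^ 2 := by
    have hentry : ∀ i j, ((Matrix.of (spearmanFormula X) - Matrix.of (spearmanFormula X')) i j) ^ 2
        ≤ (18 / n) ^ 2 := by
      intro i j
      have h := hkey i j
      have : (Matrix.of (spearmanFormula X) - Matrix.of (spearmanFormula X')) i j
          = spearmanFormula X i j - spearmanFormula X' i j := by
        simp [Matrix.sub_apply]
      rw [this]
      have habs : |spearmanFormula X i j - spearmanFormula X' i j| ^ 2 ≤ (18 / (n : ℝ)) ^ 2 := by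
        apply pow_le_pow_left₀ (abs_nonneg _) h
      rwa [sq_abs] at habs
    calc ∑ i, ∑ j, ((Matrix.of (spearmanFormula X) - Matrix.of (spearmanFormula X')) i j) ^ 2
        ≤ ∑ _i : Fin D, ∑ _j : Fin D, (18 / (n : ℝ)) ^ 2 := by
          apply Finset.sum_le_sum
          intro i _
          apply Finset.sum_le_sum
          intro j _
          exact hentry i j
      _ = (D : ℝ) * ((D : ℝ) * (18 / (n : ℝ)) ^ 2) := by
          simp [Finset.sum_const, Finset.card_univ]
      _ ≤ (18 * D / n) ^ 2 := le_of_eq (by ring)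
  unfold frobNorm
  calc Real.sqrt (∑ i, ∑ j, ((Matrix.of (spearmanFormula X) - Matrix.of (spearmanFormula X')) i j) ^ 2)
      ≤ Real.sqrt ((18 * D / n) ^ 2) := Real.sqrt_le_sqrt hbound
    _ = 18 * D / n := by
        rw [Real.sqrt_sq (by positivity)]

end
end
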